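/- arXiv:2001.07661 — 3 statements merged into one kernel-verified Lean document; each statement's English description precedes it below -/
import Mathlib

section
/- Ward identity from Haar invariance: let A, B be N×N deterministic Hermitian matrices, U a Haar-distributed unitary matrix, H = A + UBU*, G(z) = (H - zI)⁻¹ its resolvent for Im z > 0, and B̃ = UBU*. Then for every fixed index j, E[(1/N) Tr(B̃ G(z)) · G(z)_{jj}] = E[(1/N) Tr G(z) · (B̃ G(z))_{jj}]. -/
/-!
For a Hermitian `X`, left invariance of `μ` makes `t ↦ E[G(e^{itX} U)_{cd}]` constant. Along this
path `H` moves with velocity `i[X, B̃]`, so differentiating at `t = 0` (dominated convergence is free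
on the compact unitary group) gives `E[(G [X, B̃] G)_{cd}] = 0`. Writing an arbitrary matrix as
`ℜ Y + i ℑ Y`, the same holds with any `Y` in place of `X`. For `Y = E_{aj}` and `(c, d) = (a, j)`,
the sum over `a` is `Tr G · (B̃ G)_{jj} − Tr (G B̃) · G_{jj}`, which is the identity.
-/

open Matrix MeasureTheory


/-- The Borel/pi measurable structure on matrices. -/
noncomputable instance matrixMeasurableSpace {N : ℕ} :
    MeasurableSpace (Matrix (Fin N) (Fin N) ℂ) :=
  inferInstanceAs (MeasurableSpace (Fin N → Fin N → ℂ))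

/-- The induced measurable structure on the unitary group. -/
noncomputable instance unitaryGroupMeasurableSpace {N : ℕ} :
    MeasurableSpace (Matrix.unitaryGroup (Fin N) ℂ) :=
  Subtype.instMeasurableSpace

/-- The conjugated matrix `B̃ = U B U*`. -/
noncomputable def conjByUnitary {N : ℕ} (B : Matrix (Fin N) (Fin N) ℂ)
    (U : Matrix.unitaryGroup (Fin N) ℂ) : Matrix (Fin N) (Fin N) ℂ :=
  (U : Matrix (Fin N) (Fin N) ℂ) * B * star (U : Matrix (Fin N) (Fin N) ℂ)

/-- The resolvent `G(z) = (A + U B U* - z I)⁻¹`. -/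
noncomputable def resolventFreeSum {N : ℕ} (A B : Matrix (Fin N) (Fin N) ℂ) (z : ℂ)
    (U : Matrix.unitaryGroup (Fin N) ℂ) : Matrix (Fin N) (Fin N) ℂ :=
  (A + conjByUnitary B U - z • 1)⁻¹

instance Matrix.unitaryGroup.instCompactSpace {n 𝕜 : Type*} [Fintype n] [DecidableEq n]
    [RCLike 𝕜] : CompactSpace (unitaryGroup n 𝕜) := by
  refine isCompact_iff_compactSpace.mp <| IsCompact.of_isClosed_subset
    (isCompact_univ_pi fun _ => isCompact_univ_pi fun _ => isCompact_closedBall (0 : 𝕜) 1)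
    isClosed_unitary fun U hU i _ j _ => ?_
  simpa using entry_norm_bound_of_unitary hU i j

instance Matrix.borelSpace {N : ℕ} : BorelSpace (Matrix (Fin N) (Fin N) ℂ) :=
  inferInstanceAs (BorelSpace (Fin N → Fin N → ℂ))

instance Matrix.unitaryGroup.borelSpace {N : ℕ} : BorelSpace (unitaryGroup (Fin N) ℂ) :=
  Subtype.borelSpace _

theorem Continuous.integrable_of_compactSpace {X E : Type*} [TopologicalSpace X] [CompactSpace X]
    [MeasurableSpace X] [OpensMeasurableSpace X] [NormedAddCommGroup E] {μ : Measure X}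
    [IsFiniteMeasure μ] {f : X → E} (hf : Continuous f) : Integrable f μ :=
  hf.integrable_of_hasCompactSupport (.of_compactSpace f)

theorem integral_eq_zero_of_hasDerivAt_comp_measurePreserving {X E : Type*} [TopologicalSpace X]
    [CompactSpace X] [MeasurableSpace X] [OpensMeasurableSpace X] [NormedAddCommGroup E]
    [NormedSpace ℝ E] {μ : Measure X} [IsFiniteMeasure μ] {φ : ℝ → X → X}
    (hφ : ∀ t, MeasurePreserving (φ t) μ μ) (hφ₀ : ∀ x, φ 0 x = x) {f f' : X → E}
    (hf : Continuous f) (hf' : Continuous f')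
    (hderiv : ∀ t x, HasDerivAt (fun s => f (φ s x)) (f' (φ t x)) t) :
    ∫ x, f' x ∂μ = 0 := by
  obtain ⟨C, hC⟩ := (isCompact_range hf'.norm).bddAbove
  have hmeas : ∀ t, AEStronglyMeasurable (fun x => f (φ t x)) μ := fun t =>
    hf.aestronglyMeasurable_of_compactSpace.comp_measurePreserving (hφ t)
  have hconst : ∀ t, ∫ x, f (φ t x) ∂μ = ∫ x, f x ∂μ := fun t => by
    rw [← integral_map (hφ t).aemeasurable hf.aestronglyMeasurable_of_compactSpace,
      (hφ t).map_eq]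
  have hderiv_integral := (hasDerivAt_integral_of_dominated_loc_of_deriv_le (x₀ := 0)
    (F' := fun t x => f' (φ t x)) Filter.univ_mem (.of_forall hmeas)
    (hf.integrable_of_compactSpace.congr (.of_forall fun x => by simp [hφ₀]))
    (hf'.aestronglyMeasurable_of_compactSpace.comp_measurePreserving (hφ 0))
    (.of_forall fun x t _ => hC ⟨φ t x, rfl⟩) (integrable_const C)
    (.of_forall fun x t _ => hderiv t x)).2
  rw [funext hconst] at hderiv_integral
  simpa [hφ₀] using (hasDerivAt_const (0 : ℝ) (∫ x, f x ∂μ)).unique hderiv_integral |>.symm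

theorem Matrix.IsHermitian.isUnit_sub_smul_one {n 𝕜 : Type*} [Fintype n] [DecidableEq n]
    [RCLike 𝕜] {M : Matrix n n 𝕜} (hM : M.IsHermitian) {z : 𝕜} (hz : RCLike.im z ≠ 0) :
    IsUnit (M - z • 1) := by
  have hz_notMem : z ∉ spectrum 𝕜 M := by
    rw [hM.spectrum_eq_image_range]
    rintro ⟨r, -, rfl⟩
    exact hz (RCLike.ofReal_im r)
  rw [spectrum.notMem_iff, Algebra.algebraMap_eq_smul_one] at hz_notMem
  simpa using hz_notMem.neg

theorem HasDerivAt.ringInverse {𝕜 R : Type*} [NontriviallyNormedField 𝕜] [NormedRing R]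
    [HasSummableGeomSeries R] [NormedAlgebra 𝕜 R] {P : 𝕜 → R} {P' : R} {t : 𝕜}
    (hP : HasDerivAt P P' t) (hu : IsUnit (P t)) :
    HasDerivAt (fun s => Ring.inverse (P s))
      (-(Ring.inverse (P t) * P' * Ring.inverse (P t))) t := by
  have h := hasFDerivAt_ringInverse (𝕜 := 𝕜) hu.unit
  rw [hu.unit_spec] at h
  have h' := h.comp_hasDerivAt t hP
  rwa [_root_.neg_apply, ContinuousLinearMap.mulLeftRight_apply,
    ← Ring.inverse_unit, hu.unit_spec] at h'

theorem HasDerivAt.mul_mul_star {𝔸 : Type*} [NormedRing 𝔸] [NormedAlgebra ℝ 𝔸] [StarRing 𝔸]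
    [StarModule ℝ 𝔸] [ContinuousStar 𝔸] {W : ℝ → 𝔸} {K : 𝔸} {t : ℝ} (b : 𝔸)
    (hW : HasDerivAt W (K * W t) t) (hK : star K = -K) :
    HasDerivAt (fun s => W s * b * star (W s))
      (K * (W t * b * star (W t)) - W t * b * star (W t) * K) t := by
  refine ((hW.mul_const b).mul hW.star).congr_deriv ?_
  simp only [star_mul, hK, mul_neg, mul_assoc, sub_eq_add_neg]

theorem selfAdjoint.hasDerivAt_expUnitary_smul_mul {A : Type*} [NormedRing A]
    [NormedAlgebra ℂ A] [StarRing A] [ContinuousStar A] [CompleteSpace A] [StarModule ℂ A]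
    (X : selfAdjoint A) (U : unitary A) (t : ℝ) :
    HasDerivAt (fun s : ℝ => ((expUnitary (s • X) * U : unitary A) : A))
      ((Complex.I • (X : A)) * (expUnitary (t • X) * U : unitary A)) t := by
  have h := (hasDerivAt_exp_smul_const' (Complex.I • (X : A)) t).mul_const (U : A)
  simp only [Submonoid.coe_mul, expUnitary_coe, selfAdjoint.val_smul, smul_comm Complex.I,
    mul_assoc] at h ⊢
  exact h

theorem Matrix.mul_single_one_mul_apply {n R : Type*} [Fintype n] [DecidableEq n] [CommRing R]
    (X Z : Matrix n n R) (a b p q : n) : (X * single a b (1 : R) * Z) p q = X p a * Z b q := by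
  simp [Matrix.mul_apply, Matrix.single_apply, ite_and]

theorem Matrix.sum_mul_commutator_single_mul_apply {n R : Type*} [Fintype n] [DecidableEq n]
    [CommRing R] (G C : Matrix n n R) (j : n) :
    ∑ a : n, (G * (single a j (1 : R) * C - C * single a j (1 : R)) * G) a j
      = trace G * (C * G) j j - trace (G * C) * G j j := by
  have h : ∀ a, G * (single a j (1 : R) * C - C * single a j 1) * G
      = G * single a j 1 * (C * G) - G * C * single a j 1 * G := fun a => by
    simp only [Matrix.mul_sub, Matrix.sub_mul, Matrix.mul_assoc]
  simp only [h, sub_apply, mul_single_one_mul_apply, Finset.sum_sub_distrib, ← Finset.sum_mul]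
  rfl

section Resolvent

-- With the operator norm, star is isometric, as `selfAdjoint.expUnitary` requires.
open scoped Matrix.Norms.L2Operator ComplexStarModule

variable {N : ℕ} {A B : Matrix (Fin N) (Fin N) ℂ} {z : ℂ}

theorem isHermitian_conjByUnitary (hB : B.IsHermitian) (U : unitaryGroup (Fin N) ℂ) :
    (conjByUnitary B U).IsHermitian := by
  simp [conjByUnitary, IsHermitian, star_eq_conjTranspose, conjTranspose_mul, hB.eq,
    Matrix.mul_assoc]

theorem isUnit_add_conjByUnitary_sub_smul_one (hA : A.IsHermitian) (hB : B.IsHermitian)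
    (hz : z.im ≠ 0) (U : unitaryGroup (Fin N) ℂ) : IsUnit (A + conjByUnitary B U - z • 1) :=
  (hA.add (isHermitian_conjByUnitary hB U)).isUnit_sub_smul_one hz

@[fun_prop]
theorem continuous_conjByUnitary (B : Matrix (Fin N) (Fin N) ℂ) :
    Continuous (conjByUnitary B) :=
  (continuous_subtype_val.matrix_mul continuous_const).matrix_mul continuous_subtype_val.star

theorem continuous_resolventFreeSum (hA : A.IsHermitian) (hB : B.IsHermitian) (hz : z.im ≠ 0) :
    Continuous (resolventFreeSum A B z) :=
  continuous_iff_continuousAt.mpr fun U =>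
    (continuousAt_matrix_inv _ (by
      rw [Ring.inverse_eq_inv']
      exact continuousAt_inv₀ ((isUnit_add_conjByUnitary_sub_smul_one hA hB hz U).map
        detMonoidHom).ne_zero)).comp (by fun_prop)

theorem hasDerivAt_resolventFreeSum_expUnitary_smul_mul (hA : A.IsHermitian)
    (hB : B.IsHermitian) (hz : z.im ≠ 0) (X : selfAdjoint (Matrix (Fin N) (Fin N) ℂ))
    (U : unitaryGroup (Fin N) ℂ) (t : ℝ) :
    let W := selfAdjoint.expUnitary (t • X) * U
    let K := Complex.I • (X : Matrix (Fin N) (Fin N) ℂ)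
    HasDerivAt (fun s : ℝ => resolventFreeSum A B z (selfAdjoint.expUnitary (s • X) * U))
      (-(resolventFreeSum A B z W * (K * conjByUnitary B W - conjByUnitary B W * K) *
        resolventFreeSum A B z W)) t := by
  intro W K
  have hK : star K = -K := by simp [K, X.prop.star_eq]
  have hP := ((selfAdjoint.hasDerivAt_expUnitary_smul_mul X U t).mul_mul_star B hK).const_add A
    |>.sub_const (z • 1)
  simp only [resolventFreeSum, nonsing_inv_eq_ringInverse]
  exact hP.ringInverse (isUnit_add_conjByUnitary_sub_smul_one hA hB hz W)

variable {μ : Measure (unitaryGroup (Fin N) ℂ)} [IsFiniteMeasure μ]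

theorem integral_resolventFreeSum_commutator_apply_eq_zero (hA : A.IsHermitian)
    (hB : B.IsHermitian) (hz : z.im ≠ 0)
    (hHaar : ∀ V : unitaryGroup (Fin N) ℂ, Measure.map (fun U => V * U) μ = μ)
    (Y : Matrix (Fin N) (Fin N) ℂ) (c d : Fin N) :
    ∫ U, (resolventFreeSum A B z U * (Y * conjByUnitary B U - conjByUnitary B U * Y) *
      resolventFreeSum A B z U) c d ∂μ = 0 := by
  set G := resolventFreeSum A B z
  set C := conjByUnitary B
  set ω : Matrix (Fin N) (Fin N) ℂ → unitaryGroup (Fin N) ℂ → ℂ :=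
    fun Y U => (G U * (Y * C U - C U * Y) * G U) c d
  have hG : Continuous G := continuous_resolventFreeSum hA hB hz
  have hC : Continuous C := continuous_conjByUnitary B
  have hω_cont : ∀ Y, Continuous (ω Y) := fun Y => by fun_prop
  have hω_add_smul : ∀ Y₁ Y₂ (a : ℂ) U, ω (Y₁ + a • Y₂) U = ω Y₁ U + a * ω Y₂ U := by
    intro Y₁ Y₂ a U
    simp only [ω, add_mul, mul_add, Matrix.smul_mul, Matrix.mul_smul, add_sub_add_comm,
      ← smul_sub, Matrix.add_apply, Matrix.smul_apply, smul_eq_mul]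
  have hω_selfAdjoint : ∀ X : selfAdjoint (Matrix (Fin N) (Fin N) ℂ), ∫ U, ω X U ∂μ = 0 := by
    intro X
    have hderiv : ∀ t U, HasDerivAt (fun s => G (selfAdjoint.expUnitary (s • X) * U) c d)
        (-(Complex.I * ω X (selfAdjoint.expUnitary (t • X) * U))) t := fun t U => by
      have hd := ((entryLinearMap ℝ ℂ c d).toContinuousLinearMap).hasFDerivAt.comp_hasDerivAt t
        (hasDerivAt_resolventFreeSum_expUnitary_smul_mul hA hB hz X U t)
      simpa [ω, Function.comp_def, Matrix.smul_mul, Matrix.mul_smul, ← smul_sub] using hd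
    have h := integral_eq_zero_of_hasDerivAt_comp_measurePreserving
      (fun t => ⟨(continuous_const_mul _).measurable, hHaar _⟩) (by simp) (hG.matrix_elem c d)
      (continuous_const.mul (hω_cont X)).neg hderiv
    simpa [integral_neg, integral_const_mul] using h
  have hω_int : ∀ Y, Integrable (ω Y) μ := fun Y => (hω_cont Y).integrable_of_compactSpace
  calc ∫ U, ω Y U ∂μ = ∫ U, ω (ℜ Y) U + Complex.I * ω (ℑ Y) U ∂μ := by
        simp_rw [← hω_add_smul, realPart_add_I_smul_imaginaryPart]
    _ = 0 := by
        rw [integral_add (hω_int _) ((hω_int _).const_mul _), integral_const_mul,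
          hω_selfAdjoint, hω_selfAdjoint, mul_zero, add_zero]

theorem integral_trace_resolventFreeSum_mul_apply_eq (hA : A.IsHermitian)
    (hB : B.IsHermitian) (hz : z.im ≠ 0)
    (hHaar : ∀ V : unitaryGroup (Fin N) ℂ, Measure.map (fun U => V * U) μ = μ) (j : Fin N) :
    ∫ U, trace (resolventFreeSum A B z U) * (conjByUnitary B U * resolventFreeSum A B z U) j j ∂μ
      = ∫ U, trace (conjByUnitary B U * resolventFreeSum A B z U) *
          resolventFreeSum A B z U j j ∂μ := by
  set G := resolventFreeSum A B z
  set C := conjByUnitary B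
  have hG : Continuous G := continuous_resolventFreeSum hA hB hz
  have hC : Continuous C := continuous_conjByUnitary B
  have hint₁ : Integrable (fun U => trace (G U) * (C U * G U) j j) μ :=
    Continuous.integrable_of_compactSpace (by fun_prop)
  have hint₂ : Integrable (fun U => trace (C U * G U) * G U j j) μ :=
    Continuous.integrable_of_compactSpace (by fun_prop)
  rw [← sub_eq_zero, ← integral_sub hint₁ hint₂]
  calc ∫ U, trace (G U) * (C U * G U) j j - trace (C U * G U) * G U j j ∂μ
      = ∫ U, ∑ a : Fin N,
          (G U * (Matrix.single a j (1 : ℂ) * C U - C U * Matrix.single a j 1) * G U :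
            Matrix (Fin N) (Fin N) ℂ) a j ∂μ := by
        simp_rw [sum_mul_commutator_single_mul_apply, trace_mul_comm (C _)]
    _ = 0 := by
        rw [integral_finsetSum _ fun a _ => Continuous.integrable_of_compactSpace (by fun_prop)]
        exact Finset.sum_eq_zero fun a _ =>
          integral_resolventFreeSum_commutator_apply_eq_zero hA hB hz hHaar _ a j

end Resolvent

/-- Ward identity from left-invariance of Haar measure on the unitary group:
`E[(1/N) Tr(B̃ G(z)) · G(z)_{jj}] = E[(1/N) Tr G(z) · (B̃ G(z))_{jj}]`. -/
theorem ward_identity_haar_unitary {N : ℕ} (A B : Matrix (Fin N) (Fin N) ℂ)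
    (hA : A.IsHermitian) (hB : B.IsHermitian)
    (μ : Measure (Matrix.unitaryGroup (Fin N) ℂ)) [IsProbabilityMeasure μ]
    (hHaar : ∀ V : Matrix.unitaryGroup (Fin N) ℂ,
      Measure.map (fun U => V * U) μ = μ)
    (z : ℂ) (hz : 0 < z.im) (j : Fin N) :
    ∫ U, ((1 / (N : ℂ)) * Matrix.trace (conjByUnitary B U * resolventFreeSum A B z U)) *
        (resolventFreeSum A B z U j j) ∂μ
      = ∫ U, ((1 / (N : ℂ)) * Matrix.trace (resolventFreeSum A B z U)) *
        ((conjByUnitary B U * resolventFreeSum A B z U) j j) ∂μ := by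
  simp_rw [mul_assoc, integral_const_mul,
    integral_trace_resolventFreeSum_mul_apply_eq hA hB hz.ne' hHaar j]
end

section
/- Helffer–Sjöstrand formula: let f ∈ C_c²(ℝ), χ a smooth cutoff with support in [-2,2] equal to 1 on [-1,1], and define the almost-analytic extension f̃(x + iy) = (f(x) + iy f'(x)) χ(y). Then for every w ∈ ℝ, f(w) = (1/π) ∫_ℂ (∂/∂z̄) f̃(z) / (w - z) d²z, where ∂/∂z̄ = (1/2)(∂/∂x + i ∂/∂y) and d²z is Lebesgue measure on ℂ. -/
open MeasureTheory Complex

/-- The almost-analytic extension `f̃(x+iy) = (f(x) + iy f'(x)) χ(y)`. -/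
noncomputable def almostAnalyticExt (f χ : ℝ → ℝ) (z : ℂ) : ℂ :=
  ((f z.re : ℂ) + Complex.I * (z.im : ℂ) * ((deriv f z.re : ℝ) : ℂ)) * (χ z.im : ℂ)

/-- The antiholomorphic derivative `∂/∂z̄ = (1/2)(∂/∂x + i ∂/∂y)` of a function `ℂ → ℂ`. -/
noncomputable def dbar (g : ℂ → ℂ) (z : ℂ) : ℂ :=
  (1 / 2 : ℂ) * (deriv (fun x : ℝ => g ((x : ℂ) + (z.im : ℂ) * Complex.I)) z.re
    + Complex.I * deriv (fun y : ℝ => g ((z.re : ℂ) + (y : ℂ) * Complex.I)) z.im)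

open Set in
lemma clm_dir (D : ℂ →L[ℝ] ℂ) (e : ℂ) :
    D e + I * D (I * e) = ((e.re : ℂ) - e.im * I) * (D 1 + I * D I) := by
  have h1 : D e = e.re • D 1 + e.im • D I := by
    conv_lhs => rw [show e = e.re • (1:ℂ) + e.im • I by
      simp [Complex.real_smul]]
    rw [map_add, _root_.map_smul, _root_.map_smul]
  have h2 : D (I * e) = (-e.im) • D 1 + e.re • D I := by
    conv_lhs => rw [show I * e = (-e.im) • (1:ℂ) + e.re • I by
      simp [Complex.real_smul]
      apply Complex.ext <;> simp [Complex.mul_re, Complex.mul_im]]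
    rw [map_add, _root_.map_smul, _root_.map_smul]
  rw [h1, h2]
  simp only [Complex.real_smul]
  push_cast
  ring_nf
  rw [Complex.I_sq]
  ring

open Set in
lemma dbar_eq (h : ℂ → ℂ) (hd : Differentiable ℝ h) (z : ℂ) :
    dbar h z = (1 / 2 : ℂ) * ((fderiv ℝ h z) 1 + I * (fderiv ℝ h z) I) := by
  have hz : (z.re : ℂ) + (z.im : ℂ) * I = z := Complex.re_add_im z
  have hF : HasFDerivAt h (fderiv ℝ h z) ((z.re : ℂ) + (z.im : ℂ) * I) := by
    rw [hz]; exact (hd z).hasFDerivAt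
  have hx : HasDerivAt (fun x : ℝ => h ((x : ℂ) + (z.im : ℂ) * I)) ((fderiv ℝ h z) 1) z.re := by
    have h1 : HasDerivAt (fun x : ℝ => ((x : ℂ) + (z.im : ℂ) * I)) 1 z.re := by
      simpa using ((hasDerivAt_id z.re).ofReal_comp.add_const ((z.im : ℂ) * I))
    exact hF.comp_hasDerivAt z.re h1
  have hy : HasDerivAt (fun y : ℝ => h ((z.re : ℂ) + (y : ℂ) * I)) ((fderiv ℝ h z) I) z.im := by
    have h1 : HasDerivAt (fun y : ℝ => ((z.re : ℂ) + (y : ℂ) * I)) I z.im := by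
      simpa using (((hasDerivAt_id z.im).ofReal_comp.mul_const I).const_add ((z.re : ℂ)))
    exact hF.comp_hasDerivAt z.im h1
  rw [dbar, hx.deriv, hy.deriv]

open Set in
open Real in
theorem pompeiu (h : ℂ → ℂ) (hh : ContDiff ℝ 1 h) (hc : HasCompactSupport h) (w : ℂ) :
    ∫ z : ℂ, dbar h z / (w - z) = (Real.pi : ℂ) * h w := by
  have hdiff : Differentiable ℝ h := hh.differentiable one_ne_zero
  have hDcont : Continuous (fderiv ℝ h) := hh.continuous_fderiv one_ne_zero
  set E : ℝ → ℂ := fun θ => Complex.exp (θ * I) with hE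
  set P : ℝ → ℝ → ℂ := fun r θ => w - r * E θ with hPdef
  -- support radius
  obtain ⟨R', hR'⟩ := (hc.isBounded).subset_closedBall 0
  set R : ℝ := ‖w‖ + max R' 0 + 1 with hRdef
  have hRpos : 0 < R := by positivity
  have habsE : ∀ θ : ℝ, ‖E θ‖ = 1 := fun θ => Complex.norm_exp_ofReal_mul_I θ
  have hout : ∀ z : ℂ, z ∉ tsupport h → h z = 0 ∧ fderiv ℝ h z = 0 := by
    intro z hz
    refine ⟨image_eq_zero_of_notMem_tsupport hz, ?_⟩
    have hev : h =ᶠ[nhds z] (fun _ => 0) :=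
      Filter.eventuallyEq_iff_exists_mem.2 ⟨(tsupport h)ᶜ,
        (isClosed_tsupport h).isOpen_compl.mem_nhds hz,
        fun y hy => image_eq_zero_of_notMem_tsupport hy⟩
    rw [hev.fderiv_eq]; exact fderiv_const_apply _
  have hPout : ∀ r θ : ℝ, R ≤ r → P r θ ∉ tsupport h := by
    intro r θ hr hmem
    have h0 : ‖P r θ‖ ≤ R' := by
      simpa [dist_zero_right] using Metric.mem_closedBall.1 (hR' hmem)
    have h1 : ‖(r : ℂ) * E θ‖ = r := by
      simp only [norm_mul, habsE, mul_one, Complex.norm_real, Real.norm_eq_abs]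
      exact abs_of_pos (lt_of_lt_of_le hRpos hr)
    have h2 : ‖(r : ℂ) * E θ‖ - ‖w‖ ≤ ‖(r : ℂ) * E θ - w‖ := norm_sub_norm_le _ _
    rw [h1, norm_sub_rev] at h2
    have hw : ‖w‖ = ‖w‖ := rfl
    have : R' ≤ max R' 0 := le_max_left _ _
    simp only [hPdef] at h0
    nlinarith [h2.trans h0]
  have hPzero : ∀ r θ : ℝ, R ≤ r → h (P r θ) = 0 ∧ fderiv ℝ h (P r θ) = 0 :=
    fun r θ hr => hout _ (hPout r θ hr)
  -- derivative lemmas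
  have hHr : ∀ r θ : ℝ, HasDerivAt (fun r' : ℝ => h (P r' θ))
      ((fderiv ℝ h (P r θ)) (-(E θ))) r := by
    intro r θ
    have h1 : HasDerivAt (fun r' : ℝ => w - (r' : ℂ) * E θ) (-(E θ)) r := by
      simpa using (((hasDerivAt_id r).ofReal_comp.mul_const (E θ)).const_sub w)
    exact ((hdiff _).hasFDerivAt).comp_hasDerivAt r h1
  have hHθ : ∀ r θ : ℝ, HasDerivAt (fun θ' : ℝ => h (P r θ'))
      (r • (fderiv ℝ h (P r θ)) (-(I * E θ))) θ := by
    intro r θ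
    have hEd : HasDerivAt E (I * E θ) θ := by
      have h0 : HasDerivAt (fun θ' : ℝ => (θ' : ℂ) * I) I θ := by
        simpa using ((hasDerivAt_id θ).ofReal_comp.mul_const I)
      simpa [hE, mul_comm] using h0.cexp
    have h1 : HasDerivAt (fun θ' : ℝ => w - (r : ℂ) * E θ')
        (-((r : ℂ) * (I * E θ))) θ := by
      simpa using ((hEd.const_mul (r : ℂ)).const_sub w)
    have h2 := ((hdiff _).hasFDerivAt).comp_hasDerivAt θ h1
    have h3 : -((r : ℂ) * (I * E θ)) = r • (-(I * E θ)) := by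
      push_cast [Complex.real_smul]; ring
    rw [h3, _root_.map_smul] at h2
    exact h2
  -- the integrand in polar coordinates
  set F1 : ℝ × ℝ → ℂ := fun p => (fderiv ℝ h (P p.1 p.2)) (-(E p.2)) with hF1def
  set F2 : ℝ × ℝ → ℂ := fun p => (fderiv ℝ h (P p.1 p.2)) (-(I * E p.2)) with hF2def
  set F : ℝ × ℝ → ℂ := fun p => (-(1/2) : ℂ) * F1 p + (-(I/2)) * F2 p with hFdef
  have hPc : Continuous (fun p : ℝ × ℝ => P p.1 p.2) := by
    simp only [hPdef, hE]
    fun_prop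
  have hEc : Continuous (fun p : ℝ × ℝ => E p.2) := by
    simp only [hE]; fun_prop
  have hF1c : Continuous F1 := by
    exact (hDcont.comp hPc).clm_apply hEc.neg
  have hF2c : Continuous F2 := by
    exact (hDcont.comp hPc).clm_apply ((continuous_const.mul hEc).neg)
  have hFc : Continuous F := by fun_prop
  have h2pi : (-π) ≤ π := by linarith [Real.pi_pos]
  set s : Set (ℝ × ℝ) := Ioc (0:ℝ) R ×ˢ Ioo (-π) π with hsdef
  -- integrability
  have hIcc1 : IntegrableOn F1 (Icc (0:ℝ) R ×ˢ Icc (-π) π) :=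
    hF1c.continuousOn.integrableOn_compact (isCompact_Icc.prod isCompact_Icc)
  have hIcc2 : IntegrableOn F2 (Icc (0:ℝ) R ×ˢ Icc (-π) π) :=
    hF2c.continuousOn.integrableOn_compact (isCompact_Icc.prod isCompact_Icc)
  have hs_sub : s ⊆ Icc (0:ℝ) R ×ˢ Icc (-π) π :=
    prod_mono Ioc_subset_Icc_self Ioo_subset_Icc_self
  have hF1int : IntegrableOn F1 s := hIcc1.mono_set hs_sub
  have hF2int : IntegrableOn F2 s := hIcc2.mono_set hs_sub
  -- F2 integral vanishes
  have hF2zero : ∫ p in s, F2 p = 0 := by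
    rw [hsdef, Measure.volume_eq_prod, setIntegral_prod _ (by
      rw [← Measure.volume_eq_prod]; exact hF2int)]
    have inner : ∀ r ∈ Ioc (0:ℝ) R, ∫ θ in Ioo (-π) π, F2 (r, θ) = 0 := by
      intro r hr
      have e1 : ∫ θ in Ioo (-π) π, F2 (r, θ) = ∫ θ in (-π)..π, F2 (r, θ) := by
        rw [intervalIntegral.integral_of_le h2pi, integral_Ioc_eq_integral_Ioo]
      have hftc := intervalIntegral.integral_eq_sub_of_hasDerivAt (a := -π) (b := π)
        (f := fun θ' => h (P r θ')) (f' := fun θ' => r • F2 (r, θ'))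
        (fun θ' _ => hHθ r θ') (by
          apply Continuous.intervalIntegrable
          fun_prop)
      have hEpi : E π = -1 := by
        simp only [hE]; exact Complex.exp_pi_mul_I
      have hEnegpi : E (-π) = -1 := by
        simp only [hE]
        push_cast
        rw [neg_mul, Complex.exp_neg, Complex.exp_pi_mul_I]
        norm_num
      have hval : h (P r π) - h (P r (-π)) = 0 := by
        simp [hPdef, hEpi, hEnegpi]
      rw [hval] at hftc
      rw [intervalIntegral.integral_smul] at hftc
      have hr0 : r ≠ 0 := ne_of_gt hr.1
      rw [e1]
      exact (smul_eq_zero.1 hftc).resolve_left hr0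
    rw [setIntegral_congr_fun measurableSet_Ioc inner]
    simp
  -- F1 integral
  have hF1val : ∫ p in s, F1 p = -((2 * π : ℝ) • h w) := by
    rw [hsdef, Measure.volume_eq_prod, ← Measure.prod_restrict]
    rw [integral_prod_symm F1 (by
      rw [Measure.prod_restrict]; exact hF1int)]
    have inner : ∀ θ : ℝ, ∫ r in Ioc (0:ℝ) R, F1 (r, θ) = - h w := by
      intro θ
      rw [← intervalIntegral.integral_of_le hRpos.le]
      have hftc := intervalIntegral.integral_eq_sub_of_hasDerivAt (a := 0) (b := R)
        (f := fun r' => h (P r' θ)) (f' := fun r' => F1 (r', θ))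
        (fun r' _ => hHr r' θ) (by
          apply Continuous.intervalIntegrable
          exact hF1c.comp (continuous_id.prodMk continuous_const))
      rw [hftc]
      rw [(hPzero R θ le_rfl).1]
      simp [hPdef]
    simp_rw [inner]
    rw [integral_const]
    simp only [measureReal_def, Measure.restrict_apply MeasurableSet.univ, univ_inter, Real.volume_Ioo]
    rw [ENNReal.toReal_ofReal (by linarith [Real.pi_pos])]
    rw [show π - -π = 2 * π by ring, smul_neg]
  have hsint : ∫ p in s, F p = (π : ℂ) * h w := by
    simp only [hFdef]
    rw [integral_add (hF1int.const_mul _) (hF2int.const_mul _),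
      integral_const_mul, integral_const_mul, hF1val, hF2zero]
    push_cast [Complex.real_smul]
    ring
  calc ∫ z : ℂ, dbar h z / (w - z)
      = ∫ z : ℂ, dbar h (w - z) / z := by
        have := integral_sub_left_eq_self (fun z : ℂ => dbar h z / (w - z)) volume w
        simp only [sub_sub_cancel] at this
        exact this.symm
    _ = ∫ p in polarCoord.target,
          p.1 • (dbar h (w - Complex.polarCoord.symm p) / Complex.polarCoord.symm p) :=
        (Complex.integral_comp_polarCoord_symm _).symm
    _ = ∫ p in polarCoord.target, F p := by
        apply setIntegral_congr_fun polarCoord.open_target.measurableSet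
        intro p hp
        have hp1 : 0 < p.1 := hp.1
        show p.1 • (dbar h (w - Complex.polarCoord.symm p) / Complex.polarCoord.symm p) = F p
        have hsym : Complex.polarCoord.symm p = (p.1 : ℂ) * E p.2 := by
          rw [Complex.polarCoord_symm_apply]
          simp only [hE, Complex.exp_mul_I]
          push_cast
          ring
        have hPfold : w - (p.1 : ℂ) * E p.2 = P p.1 p.2 := rfl
        rw [hsym, hPfold, dbar_eq h hdiff]
        set D : ℂ →L[ℝ] ℂ := fderiv ℝ h (P p.1 p.2) with hDdef
        have e0 : E p.2 ≠ 0 := by simp [hE, Complex.exp_ne_zero]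
        have p0 : (p.1 : ℂ) ≠ 0 := by
          exact_mod_cast ne_of_gt hp1
        have habs2 : ((E p.2).re : ℝ) ^ 2 + ((E p.2).im : ℝ) ^ 2 = 1 := by
          have h1 : (‖E p.2‖) ^ 2 = 1 := by rw [habsE]; norm_num
          rw [Complex.sq_norm, Complex.normSq_apply] at h1
          simpa [sq] using h1
        have habs2C : ((E p.2).re : ℂ) ^ 2 + ((E p.2).im : ℂ) ^ 2 = 1 := by
          exact_mod_cast congrArg (Complex.ofReal) habs2
        have hinv : E p.2 * (((E p.2).re : ℂ) - (E p.2).im * I) = 1 := by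
          nth_rewrite 1 [(Complex.re_add_im (E p.2)).symm]
          linear_combination habs2C - ((E p.2).im : ℂ) ^ 2 * Complex.I_sq
        have hinv2 : ((E p.2).re : ℂ) - (E p.2).im * I = (E p.2)⁻¹ :=
          eq_inv_of_mul_eq_one_left (by rw [mul_comm]; exact hinv)
        show (p.1 : ℝ) • ((1/2 : ℂ) * (D 1 + I * D I) / ((p.1 : ℂ) * E p.2)) = F p
        simp only [hFdef, hF1def, hF2def, ← hDdef, map_neg]
        rw [show -(1/2 : ℂ) * -(D (E p.2)) + -(I/2) * -(D (I * E p.2))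
            = (1/2 : ℂ) * (D (E p.2) + I * D (I * E p.2)) by ring]
        rw [clm_dir, hinv2, Complex.real_smul]
        field_simp
    _ = ∫ p in s, F p := by
        rw [show polarCoord.target = Ioi (0:ℝ) ×ˢ Ioo (-π) π from rfl, hsdef]
        refine setIntegral_eq_of_subset_of_ae_diff_eq_zero
          (measurableSet_Ioi.prod measurableSet_Ioo).nullMeasurableSet
          (prod_mono Ioc_subset_Ioi_self (subset_refl _)) ?_
        refine Filter.Eventually.of_forall (fun p hp => ?_)
        have hp1 : 0 < p.1 := hp.1.1
        have hp2 : p.2 ∈ Ioo (-π) π := hp.1.2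
        have hR : R < p.1 := by
          by_contra hcon
          push_neg at hcon
          exact hp.2 ⟨⟨hp1, hcon⟩, hp2⟩
        have hz := (hPzero p.1 p.2 hR.le).2
        simp [hFdef, hF1def, hF2def, hz]
    _ = (π : ℂ) * h w := hsint

/-- Helffer–Sjöstrand formula: for `f ∈ C_c²(ℝ)` and a smooth cutoff `χ` supported in
`[-2,2]` equal to `1` on `[-1,1]`, with `f̃` the almost-analytic extension of `f`,
`f(w) = (1/π) ∫_ℂ (∂f̃/∂z̄)(z)/(w - z) d²z` for every real `w`. -/
theorem helffer_sjostrand (f χ : ℝ → ℝ)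
    (hf : ContDiff ℝ 2 f) (hfc : HasCompactSupport f)
    (hχ : ContDiff ℝ (⊤ : ℕ∞) χ) (hχsupp : Function.support χ ⊆ Set.Icc (-2) 2)
    (hχone : ∀ y ∈ Set.Icc (-1 : ℝ) 1, χ y = 1) (w : ℝ) :
    (f w : ℂ) = (1 / Real.pi : ℂ) *
      ∫ z : ℂ, dbar (almostAnalyticExt f χ) z / ((w : ℂ) - z) := by
  have hf' : ContDiff ℝ 1 (deriv f) := by
    have h2 : ContDiff ℝ (1 + 1) f := by norm_num; exact hf
    exact (contDiff_succ_iff_deriv.1 h2).2.2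
  have hsmooth : ContDiff ℝ 1 (almostAnalyticExt f χ) := by
    unfold almostAnalyticExt
    have hre : ContDiff ℝ 1 (fun z : ℂ => z.re) := Complex.reCLM.contDiff
    have him : ContDiff ℝ 1 (fun z : ℂ => z.im) := Complex.imCLM.contDiff
    have h1 : ContDiff ℝ 1 (fun z : ℂ => ((f z.re : ℝ) : ℂ)) :=
      Complex.ofRealCLM.contDiff.comp ((hf.of_le (by norm_num)).comp hre)
    have h2 : ContDiff ℝ 1 (fun z : ℂ => ((deriv f z.re : ℝ) : ℂ)) :=
      Complex.ofRealCLM.contDiff.comp (hf'.comp hre)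
    have h3 : ContDiff ℝ 1 (fun z : ℂ => ((χ z.im : ℝ) : ℂ)) :=
      Complex.ofRealCLM.contDiff.comp ((hχ.of_le (by simp)).comp him)
    have h4 : ContDiff ℝ 1 (fun z : ℂ => ((z.im : ℝ) : ℂ)) :=
      Complex.ofRealCLM.contDiff.comp him
    exact ((h1.add ((contDiff_const.mul h4).mul h2)).mul h3)
  have hsupp : HasCompactSupport (almostAnalyticExt f χ) := by
    obtain ⟨M, hM⟩ := (hfc.union hfc.deriv).isBounded.subset_closedBall 0
    apply HasCompactSupport.intro (K := Metric.closedBall 0 (|M| + 2))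
      (isCompact_closedBall _ _)
    intro z hz
    simp only [Metric.mem_closedBall, dist_zero_right, not_le] at hz
    unfold almostAnalyticExt
    have hle : ‖z‖ ≤ |z.re| + |z.im| := Complex.norm_le_abs_re_add_abs_im z
    rcases le_or_gt |z.re| |M| with h1 | h1
    · -- then |z.im| > 2, so χ z.im = 0
      have h2 : 2 < |z.im| := by linarith
      have : χ z.im = 0 := by
        by_contra hne
        have := hχsupp (Function.mem_support.2 hne)
        rw [Set.mem_Icc] at this
        cases abs_cases z.im with
        | inl hc => linarith [hc.1, this.2]
        | inr hc => linarith [hc.1, this.1]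
      simp [this]
    · -- |z.re| > |M| : f and deriv f vanish
      have hnm : z.re ∉ Metric.closedBall (0:ℝ) M := by
        simp only [Metric.mem_closedBall, dist_zero_right, Real.norm_eq_abs, not_le]
        exact lt_of_le_of_lt (le_abs_self M) h1
      have hns : z.re ∉ tsupport f ∪ tsupport (deriv f) := fun hmem => hnm (hM hmem)
      have hf0 : f z.re = 0 :=
        image_eq_zero_of_notMem_tsupport (fun hmem => hns (Or.inl hmem))
      have hf1 : deriv f z.re = 0 :=
        image_eq_zero_of_notMem_tsupport (fun hmem => hns (Or.inr hmem))
      simp [hf0, hf1]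
  have hint := pompeiu (almostAnalyticExt f χ) hsmooth hsupp (w : ℂ)
  have hval : almostAnalyticExt f χ (w : ℂ) = (f w : ℂ) := by
    unfold almostAnalyticExt
    simp [Complex.ofReal_re, Complex.ofReal_im, hχone 0 (by norm_num)]
  rw [hint, hval]
  have hπ : (Real.pi : ℂ) ≠ 0 := by exact_mod_cast Real.pi_ne_zero
  field_simp
end

section
/- Two-point Jacobian system: under the conditions of the two-point kernel identity, with Δ(z₁,z₂) := 1 − (L_A(z₁,z₂)/(m_fc(z₁)m_fc(z₂)) − 1)(L_B(z₁,z₂)/(m_fc(z₁)m_fc(z₂)) − 1) ≠ 0, the differences of subordination functions satisfy ω_A(z₁) − ω_A(z₂) = (z₁ − z₂) L_B(z₁,z₂) / (Δ(z₁,z₂) m_fc(z₁) m_fc(z₂)) and ω_B(z₁) − ω_B(z₂) = (z₁ − z₂) L_A(z₁,z₂) / (Δ(z₁,z₂) m_fc(z₁) m_fc(z₂)). -/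
/-!
Subtracting the subordination equation at `z₂` from the one at `z₁`, and expanding the
differences `m_fc(z₁) − m_fc(z₂)` of both representations of `m_fc` by the resolvent identity,
gives a `2 × 2` linear system for `(ω_A(z₁) − ω_A(z₂), ω_B(z₁) − ω_B(z₂))` whose determinant
is `−Δ(z₁,z₂)`; Cramer's rule solves it.
-/

/-- The two-point sum `L(z₁,z₂) = (1/N) Σ_j [(c_j − ω(z₁))(c_j − ω(z₂))]⁻¹`. -/
noncomputable def twoPointSum {N : ℕ} (c : Fin N → ℝ) (ω : ℂ → ℂ) (z₁ z₂ : ℂ) : ℂ :=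
  (1 / (N : ℂ)) * ∑ j : Fin N, (((c j : ℂ) - ω z₁) * ((c j : ℂ) - ω z₂))⁻¹

/-- The two-point Jacobian
`Δ(z₁,z₂) = 1 − (L_A/(m₁m₂) − 1)(L_B/(m₁m₂) − 1)`. -/
noncomputable def twoPointJacobian {N : ℕ} (a b : Fin N → ℝ) (ωA ωB mfc : ℂ → ℂ)
    (z₁ z₂ : ℂ) : ℂ :=
  1 - (twoPointSum b ωA z₁ z₂ / (mfc z₁ * mfc z₂) - 1) *
      (twoPointSum a ωB z₁ z₂ / (mfc z₁ * mfc z₂) - 1)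

theorem Complex.ofReal_sub_ne_zero_of_im_ne_zero {w : ℂ} (hw : w.im ≠ 0) (c : ℝ) :
    (c : ℂ) - w ≠ 0 := by
  intro h
  apply hw
  simpa using congrArg Complex.im h

theorem sub_eq_mul_twoPointSum {N : ℕ} (c : Fin N → ℝ) (ω : ℂ → ℂ) (z₁ z₂ : ℂ)
    (h₁ : ∀ j, (c j : ℂ) - ω z₁ ≠ 0) (h₂ : ∀ j, (c j : ℂ) - ω z₂ ≠ 0) :
    (1 / (N : ℂ)) * ∑ j : Fin N, ((c j : ℂ) - ω z₁)⁻¹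
      - (1 / (N : ℂ)) * ∑ j : Fin N, ((c j : ℂ) - ω z₂)⁻¹
      = (ω z₁ - ω z₂) * twoPointSum c ω z₁ z₂ := by
  have resolvent : ∀ j, ((c j : ℂ) - ω z₁)⁻¹ - ((c j : ℂ) - ω z₂)⁻¹
      = (ω z₁ - ω z₂) * (((c j : ℂ) - ω z₁) * ((c j : ℂ) - ω z₂))⁻¹ := fun j => by
    rw [inv_sub_inv (h₁ j) (h₂ j), div_eq_mul_inv]
    ring
  rw [twoPointSum, ← mul_sub, ← Finset.sum_sub_distrib, Finset.sum_congr rfl fun j _ => resolvent j,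
    ← Finset.mul_sum]
  ring

section TwoPointSystem

variable {K : Type*} [Field K] {m₁ m₂ x y t LA LB : K}

theorem eq_div_of_two_point_system (hm₁ : m₁ ≠ 0) (hm₂ : m₂ ≠ 0)
    (hΔ : 1 - (LB / (m₁ * m₂) - 1) * (LA / (m₁ * m₂) - 1) ≠ 0)
    (hx : m₁ - m₂ = x * LB) (hy : m₁ - m₂ = y * LA) (hsub : m₁⁻¹ - m₂⁻¹ = t - x - y) :
    x = t * LA / ((1 - (LB / (m₁ * m₂) - 1) * (LA / (m₁ * m₂) - 1)) * m₁ * m₂) := by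
  rw [eq_div_iff (by simp [hΔ, hm₁, hm₂])]
  field_simp at hsub ⊢
  linear_combination -(m₁ * m₂ - LA) * hx + m₁ * m₂ * hy + LA * hsub

theorem two_point_system_solution (hm₁ : m₁ ≠ 0) (hm₂ : m₂ ≠ 0)
    (hΔ : 1 - (LB / (m₁ * m₂) - 1) * (LA / (m₁ * m₂) - 1) ≠ 0)
    (hx : m₁ - m₂ = x * LB) (hy : m₁ - m₂ = y * LA) (hsub : m₁⁻¹ - m₂⁻¹ = t - x - y) :
    x = t * LA / ((1 - (LB / (m₁ * m₂) - 1) * (LA / (m₁ * m₂) - 1)) * m₁ * m₂) ∧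
    y = t * LB / ((1 - (LB / (m₁ * m₂) - 1) * (LA / (m₁ * m₂) - 1)) * m₁ * m₂) := by
  refine ⟨eq_div_of_two_point_system hm₁ hm₂ hΔ hx hy hsub, ?_⟩
  rw [mul_comm (LB / _ - 1)] at hΔ ⊢
  exact eq_div_of_two_point_system hm₁ hm₂ hΔ hy hx (by rw [hsub]; ring)

end TwoPointSystem

theorem two_point_jacobian_system_general {N : ℕ}
    (a b : Fin N → ℝ) (ωA ωB mfc : ℂ → ℂ) (z₁ z₂ : ℂ)
    (hz₁ : 0 < z₁.im) (hz₂ : 0 < z₂.im)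
    (hmapA : ∀ z : ℂ, 0 < z.im → 0 < (ωA z).im)
    (hmapB : ∀ z : ℂ, 0 < z.im → 0 < (ωB z).im)
    (hrepA : ∀ z : ℂ, 0 < z.im →
      mfc z = (1 / (N : ℂ)) * ∑ j : Fin N, ((b j : ℂ) - ωA z)⁻¹)
    (hrepB : ∀ z : ℂ, 0 < z.im →
      mfc z = (1 / (N : ℂ)) * ∑ j : Fin N, ((a j : ℂ) - ωB z)⁻¹)
    (hsub : ∀ z : ℂ, 0 < z.im → ωA z + ωB z - z = -(mfc z)⁻¹)
    (hm₁ : mfc z₁ ≠ 0) (hm₂ : mfc z₂ ≠ 0)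
    (hΔ : twoPointJacobian a b ωA ωB mfc z₁ z₂ ≠ 0) :
    ωA z₁ - ωA z₂ = (z₁ - z₂) * twoPointSum a ωB z₁ z₂ /
        (twoPointJacobian a b ωA ωB mfc z₁ z₂ * mfc z₁ * mfc z₂) ∧
    ωB z₁ - ωB z₂ = (z₁ - z₂) * twoPointSum b ωA z₁ z₂ /
        (twoPointJacobian a b ωA ωB mfc z₁ z₂ * mfc z₁ * mfc z₂) := by
  have hA : ∀ z, 0 < z.im → ∀ j, (b j : ℂ) - ωA z ≠ 0 := fun z hz _ =>
    Complex.ofReal_sub_ne_zero_of_im_ne_zero (hmapA z hz).ne' _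
  have hB : ∀ z, 0 < z.im → ∀ j, (a j : ℂ) - ωB z ≠ 0 := fun z hz _ =>
    Complex.ofReal_sub_ne_zero_of_im_ne_zero (hmapB z hz).ne' _
  have hx : mfc z₁ - mfc z₂ = (ωA z₁ - ωA z₂) * twoPointSum b ωA z₁ z₂ := by
    rw [hrepA z₁ hz₁, hrepA z₂ hz₂]
    exact sub_eq_mul_twoPointSum b ωA z₁ z₂ (hA z₁ hz₁) (hA z₂ hz₂)
  have hy : mfc z₁ - mfc z₂ = (ωB z₁ - ωB z₂) * twoPointSum a ωB z₁ z₂ := by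
    rw [hrepB z₁ hz₁, hrepB z₂ hz₂]
    exact sub_eq_mul_twoPointSum a ωB z₁ z₂ (hB z₁ hz₁) (hB z₂ hz₂)
  have hsub_diff : (mfc z₁)⁻¹ - (mfc z₂)⁻¹ = (z₁ - z₂) - (ωA z₁ - ωA z₂) - (ωB z₁ - ωB z₂) := by
    linear_combination hsub z₁ hz₁ - hsub z₂ hz₂
  exact two_point_system_solution hm₁ hm₂ hΔ hx hy hsub_diff

/-- Two-point Jacobian system: if `Δ(z₁,z₂) ≠ 0` then
`ω_A(z₁) − ω_A(z₂) = (z₁ − z₂) L_B / (Δ m_fc(z₁) m_fc(z₂))` and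
`ω_B(z₁) − ω_B(z₂) = (z₁ − z₂) L_A / (Δ m_fc(z₁) m_fc(z₂))`. -/
theorem two_point_jacobian_system {N : ℕ} (hN : 0 < N)
    (a b : Fin N → ℝ) (ωA ωB mfc : ℂ → ℂ) (z₁ z₂ : ℂ)
    (hz₁ : 0 < z₁.im) (hz₂ : 0 < z₂.im)
    (hmapA : ∀ z : ℂ, 0 < z.im → 0 < (ωA z).im)
    (hmapB : ∀ z : ℂ, 0 < z.im → 0 < (ωB z).im)
    (hrepA : ∀ z : ℂ, 0 < z.im →
      mfc z = (1 / (N : ℂ)) * ∑ j : Fin N, ((b j : ℂ) - ωA z)⁻¹)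
    (hrepB : ∀ z : ℂ, 0 < z.im →
      mfc z = (1 / (N : ℂ)) * ∑ j : Fin N, ((a j : ℂ) - ωB z)⁻¹)
    (hsub : ∀ z : ℂ, 0 < z.im → ωA z + ωB z - z = -(mfc z)⁻¹)
    (hm₁ : mfc z₁ ≠ 0) (hm₂ : mfc z₂ ≠ 0)
    (hΔ : twoPointJacobian a b ωA ωB mfc z₁ z₂ ≠ 0) :
    ωA z₁ - ωA z₂ = (z₁ - z₂) * twoPointSum a ωB z₁ z₂ /
        (twoPointJacobian a b ωA ωB mfc z₁ z₂ * mfc z₁ * mfc z₂) ∧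
    ωB z₁ - ωB z₂ = (z₁ - z₂) * twoPointSum b ωA z₁ z₂ /
        (twoPointJacobian a b ωA ωB mfc z₁ z₂ * mfc z₁ * mfc z₂) :=
  two_point_jacobian_system_general a b ωA ωB mfc z₁ z₂ hz₁ hz₂ hmapA hmapB hrepA hrepB hsub hm₁ hm₂
    hΔ
end
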